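/- arXiv:2402.00331 — 7 statements merged into one kernel-verified Lean document; each statement's English description precedes it below -/
import Mathlib

section
/- Smoothness for the right class of a modality: Let B be a category with pullbacks and let L, R be classes of morphisms of B such that (i) every morphism f of B factors as f = l ≫ r with L l and R r, (ii) for every l with L l and every r with R r, every commutative square from l to r admits a unique diagonal lift, and (iii) both L and R are stable under base change. Then for every morphism u : X ⟶ Y of B, the base-change functor from the category of R-objects over Y to the category of R-objects over X (the restriction of Over.pullback u) admits a left adjoint (given by postcomposing with u and then taking the R-part of the (L,R)-factorization). -/
universe v u

open CategoryTheory CategoryTheory.Limits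

/-- Smoothness for the right class of a modality: let `(L, R)` be a unique (orthogonal)
factorization system on a category `B` with pullbacks — every morphism factors as an
`L`-morphism followed by an `R`-morphism, and every commutative square from an `L`-morphism
to an `R`-morphism has a unique diagonal lift — with both classes stable under base change.
Then for every morphism `u : X ⟶ Y`, the restriction of `Over.pullback u` to the full
subcategories of `R`-objects admits a left adjoint. -/
theorem modality_pullback_hasLeftAdjoint {B : Type u} [Category.{v} B] [HasPullbacks B]
    (L R : MorphismProperty B)
    (hfac : ∀ ⦃A C : B⦄ (f : A ⟶ C), ∃ (Z : B) (l : A ⟶ Z) (r : Z ⟶ C),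
      L l ∧ R r ∧ l ≫ r = f)
    (hlift : ∀ ⦃A B' X' Y' : B⦄ (i : A ⟶ B') (p : X' ⟶ Y'), L i → R p →
      ∀ (f : A ⟶ X') (g : B' ⟶ Y') (sq : CommSq f i p g), Nonempty (Unique sq.LiftStruct))
    (hL : L.IsStableUnderBaseChange) (hR : R.IsStableUnderBaseChange)
    {X Y : B} (u : X ⟶ Y) :
    ∃ F : ObjectProperty.FullSubcategory (fun p : Over X => R p.hom) ⥤
        ObjectProperty.FullSubcategory (fun q : Over Y => R q.hom),
      Nonempty
        (F ⊣ ObjectProperty.lift (fun p : Over X => R p.hom)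
          (ObjectProperty.ι (fun q : Over Y => R q.hom) ⋙ Over.pullback u)
          (fun q => MorphismProperty.baseChange_obj (P := R) u q.obj q.property)) := by
  classical
  set G := ObjectProperty.lift (fun p : Over X => R p.hom)
      (ObjectProperty.ι (fun q : Over Y => R q.hom) ⋙ Over.pullback u)
      (fun q => MorphismProperty.baseChange_obj (P := R) u q.obj q.property) with hG
  have hinit : ∀ p : ObjectProperty.FullSubcategory (fun p : Over X => R p.hom),
      HasInitial (StructuredArrow p G) := by
    intro p
    obtain ⟨Z, l, r, hl, hr, hlr⟩ := hfac (p.obj.hom ≫ u)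
    let q : ObjectProperty.FullSubcategory (fun q : Over Y => R q.hom) := ⟨Over.mk r, hr⟩
    let f : p ⟶ G.obj q :=
      ObjectProperty.homMk (Over.homMk (pullback.lift l p.obj.hom hlr)
        (by exact pullback.lift_snd _ _ _))
    let I : StructuredArrow p G := StructuredArrow.mk (Y := q) f
    haveI : ∀ T : StructuredArrow p G, Unique (I ⟶ T) := by
      intro T
      have hT : T.hom.hom.left ≫ pullback.snd T.right.obj.hom u = p.obj.hom := Over.w T.hom.hom
      have sq : CommSq (T.hom.hom.left ≫ pullback.fst T.right.obj.hom u) l T.right.obj.hom r := by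
        constructor
        rw [Category.assoc, pullback.condition, ← Category.assoc, hT, hlr]
      let ul : Unique sq.LiftStruct := (hlift l T.right.obj.hom hl T.right.property _ _ sq).some
      let lf := ul.default
      have hcomp : ∀ (g : q ⟶ T.right),
          ((f ≫ G.map g).hom.left ≫ pullback.fst T.right.obj.hom u = l ≫ g.hom.left) ∧
          ((f ≫ G.map g).hom.left ≫ pullback.snd T.right.obj.hom u = p.obj.hom) := by
        intro g
        constructor
        · show (pullback.lift l p.obj.hom _ ≫
            pullback.lift (pullback.fst _ _ ≫ g.hom.left) (pullback.snd _ _) _) ≫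
              pullback.fst _ _ = l ≫ g.hom.left
          rw [Category.assoc, pullback.lift_fst, ← Category.assoc, pullback.lift_fst]
        · show (pullback.lift l p.obj.hom _ ≫
            pullback.lift (pullback.fst _ _ ≫ g.hom.left) (pullback.snd _ _) _) ≫
              pullback.snd _ _ = p.obj.hom
          rw [Category.assoc, pullback.lift_snd, pullback.lift_snd]
      have key : ∀ (mm : I ⟶ T), mm.right.hom.left = lf.l := by
        intro mm
        have hw : f ≫ G.map mm.right = T.hom := StructuredArrow.w mm
        have h1 : l ≫ mm.right.hom.left = T.hom.hom.left ≫ pullback.fst T.right.obj.hom u := by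
          rw [← (hcomp mm.right).1, hw]
        have h2 : mm.right.hom.left ≫ T.right.obj.hom = r := Over.w mm.right.hom
        exact congrArg CommSq.LiftStruct.l
          (ul.uniq { l := mm.right.hom.left, fac_left := h1, fac_right := h2 })
      refine ⟨⟨StructuredArrow.homMk (ObjectProperty.homMk (Over.homMk lf.l lf.fac_right)) ?_⟩, ?_⟩
      · apply ObjectProperty.hom_ext
        apply Over.OverMorphism.ext
        apply pullback.hom_ext
        · exact ((hcomp (ObjectProperty.homMk (Over.homMk lf.l lf.fac_right))).1).trans lf.fac_left
        · exact ((hcomp (ObjectProperty.homMk (Over.homMk lf.l lf.fac_right))).2).trans hT.symm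
      · intro mm
        apply StructuredArrow.hom_ext
        apply ObjectProperty.hom_ext
        apply Over.OverMorphism.ext
        exact key mm
    exact hasInitial_of_unique I
  haveI := hinit
  exact ⟨_, ⟨adjunctionOfStructuredArrowInitials G⟩⟩
end

section
/- Strict properness for a weak factorization system: Let B be a category with pullbacks and let L, R be classes of morphisms of B with R = L.rlp (the morphisms with the right lifting property against all of L) and L = R.llp (the morphisms with the left lifting property against all of R), such that every morphism of B factors as a morphism in L followed by a morphism in R. Let u : X ⟶ Y be a morphism all of whose base changes ū : X' ⟶ Y' are exponentiable, with pushforward functors ū_* : Over X' ⥤ Over Y' right adjoint to Over.pullback ū. Then the following are equivalent: (1) for every base change ū of u, the functor ū_* sends objects of Over X' whose structure map lies in R to objects of Over Y' whose structure map lies in R; (2) for every base change ū of u, the functor Over.pullback ū sends morphisms of Over Y' whose underlying morphism in B lies in L to morphisms whose underlying morphism lies in L. -/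
universe v u

open CategoryTheory CategoryTheory.Limits

/-- Strict properness for a weak factorization system `(L, R)`: for a morphism `u : X ⟶ Y`
all of whose base changes are exponentiable, the pushforwards along all base changes `ū` of
`u` preserve `R`-objects if and only if the pullbacks along all base changes of `u`
preserve `L`-morphisms. -/
theorem strictlyProper_iff_pullback_preserves_left_class
    {B : Type u} [Category.{v} B] [HasPullbacks B]
    (L R : MorphismProperty B)
    (hR : ∀ ⦃X' Y' : B⦄ (p : X' ⟶ Y'),
      R p ↔ ∀ ⦃A A' : B⦄ (i : A ⟶ A'), L i → HasLiftingProperty i p)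
    (hL : ∀ ⦃A A' : B⦄ (i : A ⟶ A'),
      L i ↔ ∀ ⦃X' Y' : B⦄ (p : X' ⟶ Y'), R p → HasLiftingProperty i p)
    (hfac : ∀ ⦃A C : B⦄ (f : A ⟶ C), ∃ (Z : B) (l : A ⟶ Z) (r : Z ⟶ C),
      L l ∧ R r ∧ l ≫ r = f)
    {X Y : B} (u : X ⟶ Y)
    (hexp : ∀ ⦃X' Y' : B⦄ (ubar : X' ⟶ Y'),
      (∃ (f : Y' ⟶ Y) (g : X' ⟶ X), IsPullback g ubar u f) →
      (Over.pullback ubar).IsLeftAdjoint) :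
    (∀ ⦃X' Y' : B⦄ (ubar : X' ⟶ Y'),
        (∃ (f : Y' ⟶ Y) (g : X' ⟶ X), IsPullback g ubar u f) →
        ∀ (ustar : Over X' ⥤ Over Y'), (Over.pullback ubar ⊣ ustar) →
        ∀ (p : Over X'), R p.hom → R (ustar.obj p).hom) ↔
    (∀ ⦃X' Y' : B⦄ (ubar : X' ⟶ Y'),
        (∃ (f : Y' ⟶ Y) (g : X' ⟶ X), IsPullback g ubar u f) →
        ∀ ⦃p q : Over Y'⦄ (φ : p ⟶ q), L φ.left → L ((Over.pullback ubar).map φ).left) := by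
  constructor
  · -- (1) ⇒ (2)
    intro h1 X' Y' ubar hbc p q φ hφ
    obtain ⟨f, g, hpb⟩ := hbc
    rw [hL]
    intro Z₁ Z₂ r hr
    constructor
    intro t b sq
    have hbc' : ∃ (f' : q.left ⟶ Y) (g' : pullback q.hom ubar ⟶ X),
        IsPullback g' (pullback.fst q.hom ubar) u f' :=
      ⟨q.hom ≫ f, pullback.snd q.hom ubar ≫ g,
        (IsPullback.of_hasPullback q.hom ubar).flip.paste_horiz hpb⟩
    obtain ⟨ustar', ⟨adj'⟩⟩ := hexp (pullback.fst q.hom ubar) hbc'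
    have hψfst : ((Over.pullback ubar).map φ).left ≫ pullback.fst q.hom ubar =
        pullback.fst p.hom ubar ≫ φ.left := by simp [Over.pullback]; exact pullback.lift_fst _ _ _
    have hψsnd : ((Over.pullback ubar).map φ).left ≫ pullback.snd q.hom ubar =
        pullback.snd p.hom ubar := by simp [Over.pullback]; exact pullback.lift_snd _ _ _
    -- `R` is stable under base change
    have hr' : R (pullback.fst b r) := by
      rw [hR]
      intro A A' i hi
      constructor
      intro a c sq'
      have sq₂ : CommSq (a ≫ pullback.snd b r) i r (c ≫ b) := by
        constructor
        rw [Category.assoc, ← pullback.condition, ← Category.assoc, sq'.w,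
          Category.assoc]
      haveI := (hR r).mp hr i hi
      refine ⟨⟨⟨pullback.lift c sq₂.lift sq₂.fac_right.symm, ?_, ?_⟩⟩⟩
      · apply pullback.hom_ext
        · rw [Category.assoc, pullback.lift_fst, ← sq'.w]
        · rw [Category.assoc, pullback.lift_snd, sq₂.fac_left]
      · rw [pullback.lift_fst]
    -- comparison morphism κ
    have hκw : pullback.fst φ.left (pullback.fst q.hom ubar) ≫ p.hom =
        (pullback.snd φ.left (pullback.fst q.hom ubar) ≫ pullback.snd q.hom ubar) ≫
          ubar := by
      rw [← Over.w φ, pullback.condition_assoc, pullback.condition, Category.assoc]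
    have hκψ : pullback.lift (pullback.fst φ.left (pullback.fst q.hom ubar))
          (pullback.snd φ.left (pullback.fst q.hom ubar) ≫ pullback.snd q.hom ubar) hκw ≫
          ((Over.pullback ubar).map φ).left =
        pullback.snd φ.left (pullback.fst q.hom ubar) := by
      apply pullback.hom_ext
      · rw [Category.assoc, hψfst, ← Category.assoc, pullback.lift_fst,
          pullback.condition]
      · rw [Category.assoc, hψsnd, pullback.lift_snd]
    -- morphism into the pullback `W` of `r` along `b`
    have hRstar : R ((ustar'.obj (Over.mk (pullback.fst b r))).hom) :=
      h1 (pullback.fst q.hom ubar) hbc' ustar' adj' (Over.mk (pullback.fst b r)) hr'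
    set tW : (Over.pullback (pullback.fst q.hom ubar)).obj (Over.mk φ.left) ⟶
        Over.mk (pullback.fst b r) :=
      Over.homMk
        (pullback.lift (pullback.fst φ.left (pullback.fst q.hom ubar))
          (pullback.snd φ.left (pullback.fst q.hom ubar) ≫ pullback.snd q.hom ubar) hκw ≫
          pullback.lift ((Over.pullback ubar).map φ).left t sq.w.symm)
        (by
          show _ ≫ pullback.fst b r = pullback.snd φ.left (pullback.fst q.hom ubar)
          rw [Category.assoc, pullback.lift_fst, hκψ])
      with htW
    have sq2 : CommSq ((adj'.homEquiv (Over.mk φ.left) (Over.mk (pullback.fst b r))) tW).left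
        φ.left (ustar'.obj (Over.mk (pullback.fst b r))).hom (𝟙 q.left) := by
      constructor
      simpa using Over.w ((adj'.homEquiv (Over.mk φ.left) (Over.mk (pullback.fst b r))) tW)
    haveI := (hR (ustar'.obj (Over.mk (pullback.fst b r))).hom).mp hRstar φ.left hφ
    have him : (Over.homMk φ.left (by simp) : Over.mk φ.left ⟶ Over.mk (𝟙 q.left)) ≫
        (Over.homMk sq2.lift (by simpa using sq2.fac_right) :
          Over.mk (𝟙 q.left) ⟶ ustar'.obj (Over.mk (pullback.fst b r))) =
        (adj'.homEquiv (Over.mk φ.left) (Over.mk (pullback.fst b r))) tW := by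
      ext
      simpa using sq2.fac_left
    have hnat : (Over.pullback (pullback.fst q.hom ubar)).map
          (Over.homMk φ.left (by simp) : Over.mk φ.left ⟶ Over.mk (𝟙 q.left)) ≫
          (adj'.homEquiv (Over.mk (𝟙 q.left)) (Over.mk (pullback.fst b r))).symm
            (Over.homMk sq2.lift (by simpa using sq2.fac_right)) = tW := by
      rw [← Adjunction.homEquiv_naturality_left_symm, him, Equiv.symm_apply_apply]
    -- the candidate lift in `W`
    set msharp := (adj'.homEquiv (Over.mk (𝟙 q.left)) (Over.mk (pullback.fst b r))).symm
      (Over.homMk sq2.lift (by simpa using sq2.fac_right)) with hmsharp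
    have hlamw : pullback.fst q.hom ubar ≫ 𝟙 q.left =
        𝟙 (pullback q.hom ubar) ≫ pullback.fst q.hom ubar := by simp
    have hℓr' : (pullback.lift (pullback.fst q.hom ubar) (𝟙 (pullback q.hom ubar)) hlamw ≫ msharp.left) ≫
        pullback.fst b r = 𝟙 _ := by
      rw [Category.assoc,
        show msharp.left ≫ pullback.fst b r =
          pullback.snd (𝟙 q.left) (pullback.fst q.hom ubar) from Over.w msharp,
        pullback.lift_snd]
    -- inverse comparison
    have hw1 : (pullback.fst p.hom ubar ≫ φ.left) ≫ q.hom =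
        pullback.snd p.hom ubar ≫ ubar := by
      rw [Category.assoc, Over.w φ, pullback.condition]
    have hψinner : ((Over.pullback ubar).map φ).left =
        pullback.lift (pullback.fst p.hom ubar ≫ φ.left) (pullback.snd p.hom ubar) hw1 := by
      apply pullback.hom_ext
      · rw [hψfst, pullback.lift_fst]
      · rw [hψsnd, pullback.lift_snd]
    have hw2 : pullback.fst p.hom ubar ≫ φ.left =
        pullback.lift (pullback.fst p.hom ubar ≫ φ.left) (pullback.snd p.hom ubar) hw1 ≫
          pullback.fst q.hom ubar := (pullback.lift_fst _ _ _).symm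
    have hκκ : pullback.lift (pullback.fst p.hom ubar)
          (pullback.lift (pullback.fst p.hom ubar ≫ φ.left) (pullback.snd p.hom ubar) hw1)
          hw2 ≫
        pullback.lift (pullback.fst φ.left (pullback.fst q.hom ubar))
          (pullback.snd φ.left (pullback.fst q.hom ubar) ≫ pullback.snd q.hom ubar) hκw =
        𝟙 _ := by
      apply pullback.hom_ext
      · rw [Category.assoc, pullback.lift_fst, pullback.lift_fst, Category.id_comp]
      · rw [Category.assoc, pullback.lift_snd, ← Category.assoc, pullback.lift_snd,
          pullback.lift_snd, Category.id_comp]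
    have hμ : ((Over.pullback ubar).map φ).left ≫
          pullback.lift (pullback.fst q.hom ubar) (𝟙 (pullback q.hom ubar)) hlamw =
        pullback.lift (pullback.fst p.hom ubar)
          (pullback.lift (pullback.fst p.hom ubar ≫ φ.left) (pullback.snd p.hom ubar) hw1)
          hw2 ≫
        ((Over.pullback (pullback.fst q.hom ubar)).map
          (Over.homMk φ.left (by simp) : Over.mk φ.left ⟶ Over.mk (𝟙 q.left))).left := by
      apply pullback.hom_ext
      · rw [Category.assoc, Category.assoc, pullback.lift_fst,
          show ((Over.pullback (pullback.fst q.hom ubar)).map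
            (Over.homMk φ.left (by simp) : Over.mk φ.left ⟶ Over.mk (𝟙 q.left))).left ≫
            pullback.fst (𝟙 q.left) (pullback.fst q.hom ubar) =
            pullback.fst φ.left (pullback.fst q.hom ubar) ≫ φ.left by
              simp [Over.pullback]; exact pullback.lift_fst _ _ _,
          ← Category.assoc, pullback.lift_fst, hψfst]
      · rw [Category.assoc, Category.assoc, pullback.lift_snd,
          show ((Over.pullback (pullback.fst q.hom ubar)).map
            (Over.homMk φ.left (by simp) : Over.mk φ.left ⟶ Over.mk (𝟙 q.left))).left ≫
            pullback.snd (𝟙 q.left) (pullback.fst q.hom ubar) =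
            pullback.snd φ.left (pullback.fst q.hom ubar) by simp [Over.pullback]; exact pullback.lift_snd _ _ _,
          pullback.lift_snd]
        exact (Category.comp_id _).trans hψinner
    have hmain : ((Over.pullback ubar).map φ).left ≫
        (pullback.lift (pullback.fst q.hom ubar) (𝟙 (pullback q.hom ubar)) hlamw ≫ msharp.left) =
        pullback.lift ((Over.pullback ubar).map φ).left t sq.w.symm := by
      rw [← Category.assoc, hμ, Category.assoc]
      have h3 : ((Over.pullback (pullback.fst q.hom ubar)).map
          (Over.homMk φ.left (by simp) : Over.mk φ.left ⟶ Over.mk (𝟙 q.left))).left ≫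
          msharp.left =
          pullback.lift (pullback.fst φ.left (pullback.fst q.hom ubar))
            (pullback.snd φ.left (pullback.fst q.hom ubar) ≫ pullback.snd q.hom ubar) hκw ≫
            pullback.lift ((Over.pullback ubar).map φ).left t sq.w.symm := by
        have h4 := congrArg CommaMorphism.left hnat
        simpa [htW] using h4
      rw [h3, ← Category.assoc, hκκ]
      exact Category.id_comp _
    refine ⟨⟨⟨(pullback.lift (pullback.fst q.hom ubar) (𝟙 (pullback q.hom ubar)) hlamw ≫ msharp.left) ≫
      pullback.snd b r, ?_, ?_⟩⟩⟩
    · rw [← Category.assoc, hmain, pullback.lift_snd]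
    · have e1 : ((pullback.lift (pullback.fst q.hom ubar) (𝟙 (pullback q.hom ubar)) hlamw ≫ msharp.left) ≫
          pullback.snd b r) ≫ r =
          ((pullback.lift (pullback.fst q.hom ubar) (𝟙 (pullback q.hom ubar)) hlamw ≫ msharp.left) ≫
          pullback.fst b r) ≫ b := by
        rw [Category.assoc, Category.assoc, ← pullback.condition]
        simp only [Category.assoc]
      rw [e1, hℓr']
      exact Category.id_comp b
  · -- (2) ⇒ (1)
    intro h2 X' Y' ubar hbc ustar adj p hp
    rw [hR]
    intro A A' i hi
    constructor
    intro t b sq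
    have hLi : L ((Over.pullback ubar).map
        (Over.homMk i (by simp) : Over.mk (i ≫ b) ⟶ Over.mk b)).left :=
      h2 ubar hbc (Over.homMk i (by simp) : Over.mk (i ≫ b) ⟶ Over.mk b) hi
    haveI : HasLiftingProperty ((Over.pullback ubar).map
        (Over.homMk i (by simp) : Over.mk (i ≫ b) ⟶ Over.mk b)).left p.hom :=
      (hL _).mp hLi p.hom hp
    have sq3 : CommSq ((adj.homEquiv (Over.mk (i ≫ b)) p).symm
          (Over.homMk t (by simpa using sq.w))).left
        ((Over.pullback ubar).map
          (Over.homMk i (by simp) : Over.mk (i ≫ b) ⟶ Over.mk b)).left p.hom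
        ((Over.pullback ubar).obj (Over.mk b)).hom :=
      ⟨(Over.w ((adj.homEquiv (Over.mk (i ≫ b)) p).symm
          (Over.homMk t (by simpa using sq.w)))).trans
        (Over.w ((Over.pullback ubar).map
          (Over.homMk i (by simp) : Over.mk (i ≫ b) ⟶ Over.mk b))).symm⟩
    have hcomp : (Over.pullback ubar).map
          (Over.homMk i (by simp) : Over.mk (i ≫ b) ⟶ Over.mk b) ≫
          (Over.homMk sq3.lift sq3.fac_right :
            (Over.pullback ubar).obj (Over.mk b) ⟶ p) =
        (adj.homEquiv (Over.mk (i ≫ b)) p).symm (Over.homMk t (by simpa using sq.w)) := by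
      ext
      simpa using sq3.fac_left
    have hfl : (Over.homMk i (by simp) : Over.mk (i ≫ b) ⟶ Over.mk b) ≫
        (adj.homEquiv (Over.mk b) p) (Over.homMk sq3.lift sq3.fac_right) =
        Over.homMk t (by simpa using sq.w) := by
      rw [← Adjunction.homEquiv_naturality_left, hcomp, Equiv.apply_symm_apply]
    refine ⟨⟨⟨((adj.homEquiv (Over.mk b) p) (Over.homMk sq3.lift sq3.fac_right)).left,
      ?_, ?_⟩⟩⟩
    · have := congrArg CommaMorphism.left hfl
      simpa using this
    · simpa using Over.w ((adj.homEquiv (Over.mk b) p) (Over.homMk sq3.lift sq3.fac_right))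
end

section
/- Acyclic index sets for a nontrivial category: Let C be a category and I a type. Suppose C has at least one object, C is not equivalent to the terminal category (there is no equivalence of categories between C and Discrete PUnit), and the diagonal (constant-diagram) functor C ⥤ (Discrete I ⥤ C) is an equivalence of categories. Then I has exactly one element (Nonempty (Unique I)). -/
universe w v u

open CategoryTheory

/-- Acyclic index sets for a nontrivial category: if `C` is nonempty, not equivalent to the
terminal category, and the constant-diagram functor `C ⥤ (Discrete I ⥤ C)` is an
equivalence, then `I` is a singleton. -/
theorem acyclic_index_of_nontrivial {C : Type u} [Category.{v} C] (I : Type w)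
    (hne : Nonempty C)
    (hnt : ¬ Nonempty (C ≌ Discrete PUnit))
    (heq : (Functor.const (Discrete I) : C ⥤ Discrete I ⥤ C).IsEquivalence) :
    Nonempty (Unique I) := by
  classical
  by_contra h
  apply hnt
  rw [CategoryTheory.equiv_punit_iff_unique]
  refine ⟨hne, fun X Y => ?_⟩
  set Φ : C ⥤ Discrete I ⥤ C := Functor.const (Discrete I)
  haveI : Φ.IsEquivalence := heq
  rcases isEmpty_or_nonempty I with hI | hI
  · -- I empty
    have existsHom : Nonempty (X ⟶ Y) := by
      let τ : Φ.obj X ⟶ Φ.obj Y := Discrete.natTrans (fun i => (hI.false i.as).elim)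
      obtain ⟨f, -⟩ := Φ.map_surjective τ
      exact ⟨f⟩
    have sub : Subsingleton (X ⟶ Y) := by
      constructor
      intro f g
      apply Φ.map_injective
      apply NatTrans.ext
      funext i
      exact (hI.false i.as).elim
    exact ⟨@uniqueOfSubsingleton _ sub existsHom.some⟩
  · -- I nonempty; since ¬ Unique I, there are two distinct elements
    obtain ⟨i⟩ := hI
    have hij : ∃ j : I, j ≠ i := by
      by_contra hj
      push_neg at hj
      exact h ⟨⟨⟨i⟩, hj⟩⟩
    obtain ⟨j, hji⟩ := hij
    have sub : Subsingleton (X ⟶ Y) := by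
      constructor
      intro f g
      let τ : Φ.obj X ⟶ Φ.obj Y :=
        Discrete.natTrans (fun k => if k.as = i then f else g)
      obtain ⟨u, hu⟩ := Φ.map_surjective τ
      have hi : (Φ.map u).app ⟨i⟩ = τ.app ⟨i⟩ := by rw [hu]
      have hj' : (Φ.map u).app ⟨j⟩ = τ.app ⟨j⟩ := by rw [hu]
      simp only [τ, Discrete.natTrans_app, Φ, Functor.const_obj_obj,
        Functor.const_map_app] at hi hj'
      rw [if_true] at hi
      rw [if_neg hji] at hj'
      rw [← hi, ← hj']
    have existsHom : Nonempty (X ⟶ Y) := by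
      let F : Discrete I ⥤ C := Discrete.functor (fun k => if k = i then X else Y)
      let Z := Φ.objPreimage F
      let e : Φ.obj Z ≅ F := Φ.objObjPreimageIso F
      have h1 : F.obj ⟨i⟩ = X := if_pos rfl
      have h2 : F.obj ⟨j⟩ = Y := if_neg hji
      exact ⟨eqToHom h1.symm ≫ e.inv.app ⟨i⟩ ≫ e.hom.app ⟨j⟩ ≫ eqToHom h2⟩
    exact ⟨@uniqueOfSubsingleton _ sub existsHom.some⟩
end

section
/- If u : C ⥤ D is a functor between small categories such that the restriction functor on presheaves (Dᵒᵖ ⥤ Type) ⥤ (Cᵒᵖ ⥤ Type), given by precomposition with u.op, is an equivalence of categories, then u is fully faithful. -/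
universe u

open CategoryTheory

/-- If `u : C ⥤ D` is a functor between small categories such that restriction along `u`
(precomposition with `u.op`) is an equivalence between the presheaf categories, then `u`
is fully faithful. -/
theorem fullyFaithful_of_restriction_equivalence
    {C D : Type u} [SmallCategory C] [SmallCategory D] (u : C ⥤ D)
    (h : ((Functor.whiskeringLeft Cᵒᵖ Dᵒᵖ (Type u)).obj u.op).IsEquivalence) :
    u.Full ∧ u.Faithful := by
  have : (u.op.lan : (Cᵒᵖ ⥤ Type u) ⥤ (Dᵒᵖ ⥤ Type u)).IsEquivalence := by
    exact (u.op.lanAdjunction (Type u)).isEquivalence_left_of_isEquivalence_right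
  have e : u ⋙ yoneda ≅ yoneda ⋙ u.op.lan :=
    Functor.isoWhiskerLeft u uliftYonedaIsoYoneda.{u}.symm ≪≫
      Presheaf.compULiftYonedaIsoULiftYonedaCompLan.{0} u ≪≫
      Functor.isoWhiskerRight uliftYonedaIsoYoneda.{u} _
  have hfull : (u ⋙ yoneda).Full := Functor.Full.of_iso e.symm
  have hfaith : (u ⋙ yoneda).Faithful := Functor.Faithful.of_iso e.symm
  exact ⟨Functor.Full.of_comp_faithful u yoneda, Functor.Faithful.of_comp u yoneda⟩
end

section
/- Acyclic functors are equivalences: Let u : C ⥤ D be a functor between small categories such that for every small category E, every functor v : E ⥤ D, and every pullback square in the category Cat of small categories with bottom-right cospan (u, v) — with pullback P, projection ū : P ⥤ E — the restriction functor (Eᵒᵖ ⥤ Type) ⥤ (Pᵒᵖ ⥤ Type) given by precomposition with ū.op is an equivalence of categories. Then u is an equivalence of categories. -/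
universe u

open CategoryTheory

lemma fullyFaithful_of_whiskeringLeft_isEquivalence
    {A B : Type u} [SmallCategory A] [SmallCategory B] (f : A ⥤ B)
    (hf : ((Functor.whiskeringLeft Aᵒᵖ Bᵒᵖ (Type u)).obj f.op).IsEquivalence) :
    f.Full ∧ f.Faithful := by
  have := hf
  have adj := f.op.lanAdjunction (Type u)
  have hl : f.op.lan.IsEquivalence := adj.isEquivalence_left_of_isEquivalence_right
  have e : f ⋙ uliftYoneda.{max 0 u} ≅ uliftYoneda.{max 0 u} ⋙ f.op.lan :=
    Presheaf.compULiftYonedaIsoULiftYonedaCompLan f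
  have h1 : (f ⋙ uliftYoneda.{max 0 u}).Full := Functor.Full.of_iso e.symm
  have h2 : (f ⋙ uliftYoneda.{max 0 u}).Faithful := Functor.Faithful.of_iso e.symm
  exact ⟨Functor.Full.of_comp_faithful f uliftYoneda.{max 0 u}, Functor.Faithful.of_comp f uliftYoneda.{max 0 u}⟩

/-- Acyclic functors are equivalences: if `u : C ⥤ D` is a functor between small
categories such that for every pullback square in `Cat` with bottom-right cospan
`(u, v : E ⥤ D)`, the projection `ū : P ⥤ E` of the pullback induces an equivalence on
presheaf categories by precomposition with `ū.op`, then `u` is an equivalence. -/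
theorem acyclic_functor_isEquivalence (C D : Cat.{u, u}) (u : C ⟶ D)
    (h : ∀ (P E : Cat.{u, u}) (v : E ⟶ D) (ubar : P ⟶ E) (g : P ⟶ C),
      IsPullback g ubar u v →
      ((Functor.whiskeringLeft (↑P)ᵒᵖ (↑E)ᵒᵖ (Type u)).obj (Functor.op ubar.toFunctor)).IsEquivalence) :
    Functor.IsEquivalence (u.toFunctor : ↑C ⥤ ↑D) := by
  obtain ⟨hfull, hfaith⟩ := fullyFaithful_of_whiskeringLeft_isEquivalence (u.toFunctor : ↑C ⥤ ↑D)
    (h C D (𝟙 D) u (𝟙 C) IsPullback.of_id_fst)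
  have essSurj : Functor.EssSurj (u.toFunctor : ↑C ⥤ ↑D) := by
    constructor
    intro d
    let E : Cat.{u, u} := Cat.of (Discrete PUnit.{u + 1})
    let v : E ⟶ D := ((Functor.const _).obj d).toCatHom
    let P : Cat.{u, u} := Limits.pullback u v
    have hpb := IsPullback.of_hasPullback u v
    have heq := h P E v (Limits.pullback.snd u v) (Limits.pullback.fst u v) hpb
    set W := (Functor.whiskeringLeft (↑P)ᵒᵖ (↑E)ᵒᵖ (Type u)).obj (Functor.op (Limits.pullback.snd u v).toFunctor)
      with hW
    have : W.IsEquivalence := heq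
    have hne : Nonempty ↑P := by
      by_contra hempty
      rw [not_nonempty_iff] at hempty
      let A : (↑E)ᵒᵖ ⥤ Type u := (Functor.const _).obj PEmpty
      let B : (↑E)ᵒᵖ ⥤ Type u := (Functor.const _).obj PUnit
      have iso : W.obj A ≅ W.obj B :=
        NatIso.ofComponents (fun p => (hempty.false p.unop).elim)
          (fun {X Y} f => (hempty.false X.unop).elim)
      have isoAB : A ≅ B := W.preimageIso iso
      exact ((isoAB.app (Opposite.op ⟨PUnit.unit⟩)).inv PUnit.unit).elim
    obtain ⟨p⟩ := hne
    refine ⟨(Limits.pullback.fst u v).toFunctor.obj p, ⟨eqToIso ?_⟩⟩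
    have hc := Functor.congr_obj (congrArg Cat.Hom.toFunctor (Limits.pullback.condition (f := u) (g := v))) p
    exact hc
  exact { faithful := hfaith, full := hfull, essSurj := essSurj }
end

section
/- Acyclic maps for the codomain fibration are isomorphisms: Let B be a category with pullbacks and u : X ⟶ Y a morphism such that the base-change functor Over.pullback u : Over Y ⥤ Over X is an equivalence of categories. Then u is an isomorphism. -/
universe v u

open CategoryTheory CategoryTheory.Limits

/-- Acyclic maps for the codomain fibration are isomorphisms: if the base-change functor
`Over.pullback u : Over Y ⥤ Over X` is an equivalence of categories, then `u` is an
isomorphism. -/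
theorem isIso_of_pullback_isEquivalence {B : Type u} [Category.{v} B] [HasPullbacks B]
    {X Y : B} (u : X ⟶ Y) (h : (Over.pullback u).IsEquivalence) : IsIso u := by
  let adj := Over.mapPullbackAdj u
  haveI : IsIso adj.counit := inferInstance
  haveI : IsIso (adj.counit.app (Over.mk (𝟙 Y))) := inferInstance
  haveI : IsIso ((Over.forget Y).map (adj.counit.app (Over.mk (𝟙 Y)))) := inferInstance
  have hw := Over.w (adj.counit.app (Over.mk (𝟙 Y)))
  have hc : (adj.counit.app (Over.mk (𝟙 Y))).left
      = (pullback.snd (𝟙 Y) u : pullback (𝟙 Y) u ⟶ X) ≫ u := by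
    simpa using hw
  haveI : IsIso (pullback.snd (𝟙 Y) u) := inferInstance
  have : u = inv (pullback.snd (𝟙 Y) u) ≫ (adj.counit.app (Over.mk (𝟙 Y))).left := by
    rw [hc]; simp
  rw [this]
  haveI : IsIso (adj.counit.app (Over.mk (𝟙 Y))).left := (Over.forget Y).map_isIso (adj.counit.app (Over.mk (𝟙 Y)))
  infer_instance
end

section
/- Acyclic maps are smooth and proper: Let B be a category with pullbacks and C : Bᵒᵖ ⥤ Cat a functor. Let u : X ⟶ Y be C-acyclic, i.e. for every base change ū of u (every pullback of u along a morphism of B) the functor C.map ū.op is an equivalence of categories. Then u is both C-smooth and C-proper: for every pullback square with right leg a base change of u, the reindexing functors along the two parallel legs admit left adjoints (respectively right adjoints), namely the inverse equivalences, and the corresponding left (respectively right) Beck–Chevalley mate transformations are natural isomorphisms. -/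
universe v₂ u₂ v u

open CategoryTheory CategoryTheory.Limits Opposite

namespace IndexedCat

variable {B : Type u} [Category.{v} B]

/-- For a `B`-indexed category `C : Bᵒᵖ ⥤ Cat` and a commuting square `vbar ≫ u = ubar ≫ v`
in `B`, the two composites of reindexing functors are equal. -/
theorem reindexSquareEq (C : Bᵒᵖ ⥤ Cat.{v₂, u₂}) {W Z X Y : B}
    (u : X ⟶ Y) (v : Z ⟶ Y) (ubar : W ⟶ Z) (vbar : W ⟶ X)
    (w : vbar ≫ u = ubar ≫ v) :
    (((C.map u.op).toFunctor : ↑(C.obj (op Y)) ⥤ ↑(C.obj (op X))) ⋙ (C.map vbar.op).toFunctor : _ ⥤ _) =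
      ((C.map v.op).toFunctor : ↑(C.obj (op Y)) ⥤ ↑(C.obj (op Z))) ⋙ (C.map ubar.op).toFunctor := by
  change (C.map u.op ≫ C.map vbar.op).toFunctor = (C.map v.op ≫ C.map ubar.op).toFunctor
  rw [← C.map_comp, ← C.map_comp, ← op_comp, ← op_comp, w]

/-- A morphism `u : X ⟶ Y` of `B` is *left Beck–Chevalley* for `C : Bᵒᵖ ⥤ Cat` if for
every pullback square over `u` the reindexing functors along `u` and its base change
admit left adjoints and the left Beck–Chevalley mate is a natural isomorphism. -/
def LeftBeckChevalley (C : Bᵒᵖ ⥤ Cat.{v₂, u₂}) {X Y : B} (u : X ⟶ Y) : Prop :=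
  ∀ ⦃W Z : B⦄ (v : Z ⟶ Y) (ubar : W ⟶ Z) (vbar : W ⟶ X) (sq : IsPullback vbar ubar u v),
    ∃ (ushriek : ↑(C.obj (op X)) ⥤ ↑(C.obj (op Y)))
      (adj : ushriek ⊣ ((C.map u.op).toFunctor : ↑(C.obj (op Y)) ⥤ ↑(C.obj (op X))))
      (ubarshriek : ↑(C.obj (op W)) ⥤ ↑(C.obj (op Z)))
      (adjbar : ubarshriek ⊣ ((C.map ubar.op).toFunctor : ↑(C.obj (op Z)) ⥤ ↑(C.obj (op W)))),
      IsIso ((mateEquiv adj adjbar).symm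
        (eqToHom (reindexSquareEq C u v ubar vbar sq.w)))

/-- A morphism `u : X ⟶ Y` of `B` is *right Beck–Chevalley* for `C : Bᵒᵖ ⥤ Cat` if for
every pullback square over `u` the reindexing functors along `u` and its base change
admit right adjoints and the right Beck–Chevalley mate `v^* ⋙ u_* ⟶ ū_* ⋙ vbar^*`
(read as `v^* ∘ u_* ⟶ ū_* ∘ v̄^*`) is a natural isomorphism. -/
def RightBeckChevalley (C : Bᵒᵖ ⥤ Cat.{v₂, u₂}) {X Y : B} (u : X ⟶ Y) : Prop :=
  ∀ ⦃W Z : B⦄ (v : Z ⟶ Y) (ubar : W ⟶ Z) (vbar : W ⟶ X) (sq : IsPullback vbar ubar u v),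
    ∃ (ustar : ↑(C.obj (op X)) ⥤ ↑(C.obj (op Y)))
      (adj : ((C.map u.op).toFunctor : ↑(C.obj (op Y)) ⥤ ↑(C.obj (op X))) ⊣ ustar)
      (ubarstar : ↑(C.obj (op W)) ⥤ ↑(C.obj (op Z)))
      (adjbar : ((C.map ubar.op).toFunctor : ↑(C.obj (op Z)) ⥤ ↑(C.obj (op W))) ⊣ ubarstar),
      IsIso (mateEquiv adj adjbar
        (eqToHom (reindexSquareEq C u v ubar vbar sq.w).symm))

/-- A morphism `u` of `B` is *smooth* for `C` if every base change of `u` is left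
Beck–Chevalley for `C`. -/
def Smooth (C : Bᵒᵖ ⥤ Cat.{v₂, u₂}) {X Y : B} (u : X ⟶ Y) : Prop :=
  ∀ ⦃W Z : B⦄ (v : Z ⟶ Y) (ubar : W ⟶ Z) (vbar : W ⟶ X),
    IsPullback vbar ubar u v → LeftBeckChevalley C ubar

/-- A morphism `u` of `B` is *proper* for `C` if every base change of `u` is right
Beck–Chevalley for `C`. -/
def Proper (C : Bᵒᵖ ⥤ Cat.{v₂, u₂}) {X Y : B} (u : X ⟶ Y) : Prop :=
  ∀ ⦃W Z : B⦄ (v : Z ⟶ Y) (ubar : W ⟶ Z) (vbar : W ⟶ X),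
    IsPullback vbar ubar u v → RightBeckChevalley C ubar

/-- A morphism `u` of `B` is *acyclic* for `C` if for every base change `ū` of `u` the
reindexing functor `ū^* = C.map ū.op` is an equivalence of categories. -/
def Acyclic (C : Bᵒᵖ ⥤ Cat.{v₂, u₂}) {X Y : B} (u : X ⟶ Y) : Prop :=
  ∀ ⦃W Z : B⦄ (v : Z ⟶ Y) (ubar : W ⟶ Z) (vbar : W ⟶ X),
    IsPullback vbar ubar u v →
      ((C.map ubar.op).toFunctor : ↑(C.obj (op Z)) ⥤ ↑(C.obj (op W))).IsEquivalence

section MateIso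

variable {C₁ : Type*} {D₁ : Type*} {E₁ : Type*} {F₁ : Type*}
variable [Category C₁] [Category D₁] [Category E₁] [Category F₁]
variable {G : C₁ ⥤ E₁} {H : D₁ ⥤ F₁} {L₁ : C₁ ⥤ D₁} {R₁ : D₁ ⥤ C₁} {L₂ : E₁ ⥤ F₁} {R₂ : F₁ ⥤ E₁}

lemma isIso_mateEquiv (adj₁ : L₁ ⊣ R₁) (adj₂ : L₂ ⊣ R₂)
    [IsIso adj₁.counit] [IsIso adj₂.unit]
    (α : G ⋙ L₂ ⟶ L₁ ⋙ H) [IsIso α] : IsIso (mateEquiv adj₁ adj₂ α) := by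
  dsimp [mateEquiv]
  infer_instance

lemma isIso_mateEquiv_symm (adj₁ : L₁ ⊣ R₁) (adj₂ : L₂ ⊣ R₂)
    [IsIso adj₁.unit] [IsIso adj₂.counit]
    (β : R₁ ⋙ G ⟶ H ⋙ R₂) [IsIso β] : IsIso ((mateEquiv adj₁ adj₂).symm β) := by
  dsimp [mateEquiv]
  infer_instance

end MateIso

/-- Acyclic maps are smooth and proper. -/
theorem Acyclic.smooth_and_proper {B : Type u} [Category.{v} B] [HasPullbacks B]
    (C : Bᵒᵖ ⥤ Cat.{v₂, u₂}) {X Y : B} (u : X ⟶ Y) (hu : Acyclic C u) :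
    Smooth C u ∧ Proper C u := by
  constructor
  · intro W Z v ubar vbar sq W' Z' v' ubar' vbar' sq'
    have h1 : (C.map ubar.op).toFunctor.IsEquivalence := hu v ubar vbar sq
    have h2 : (C.map ubar'.op).toFunctor.IsEquivalence :=
      hu (v' ≫ v) ubar' (vbar' ≫ vbar) (sq'.paste_horiz sq)
    let e := (C.map ubar.op).toFunctor.asEquivalence
    let e' := (C.map ubar'.op).toFunctor.asEquivalence
    refine ⟨e.inverse, e.symm.toAdjunction, e'.inverse, e'.symm.toAdjunction, ?_⟩
    haveI : IsIso e.symm.toAdjunction.unit := inferInstanceAs (IsIso e.symm.unitIso.hom)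
    haveI : IsIso e'.symm.toAdjunction.counit := inferInstanceAs (IsIso e'.symm.counitIso.hom)
    haveI hI : IsIso (eqToHom (reindexSquareEq C ubar v' ubar' vbar' sq'.w)) := Iso.isIso_hom (eqToIso (reindexSquareEq C ubar v' ubar' vbar' sq'.w))
    exact @isIso_mateEquiv_symm _ _ _ _ _ _ _ _ _ _ _ _ _ _ e.symm.toAdjunction e'.symm.toAdjunction _ _ _ hI
  · intro W Z v ubar vbar sq W' Z' v' ubar' vbar' sq'
    have h1 : (C.map ubar.op).toFunctor.IsEquivalence := hu v ubar vbar sq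
    have h2 : (C.map ubar'.op).toFunctor.IsEquivalence :=
      hu (v' ≫ v) ubar' (vbar' ≫ vbar) (sq'.paste_horiz sq)
    let e := (C.map ubar.op).toFunctor.asEquivalence
    let e' := (C.map ubar'.op).toFunctor.asEquivalence
    refine ⟨e.inverse, e.toAdjunction, e'.inverse, e'.toAdjunction, ?_⟩
    haveI : IsIso e.toAdjunction.counit := inferInstanceAs (IsIso e.counitIso.hom)
    haveI : IsIso e'.toAdjunction.unit := inferInstanceAs (IsIso e'.unitIso.hom)
    haveI hI : IsIso (eqToHom (reindexSquareEq C ubar v' ubar' vbar' sq'.w).symm) := Iso.isIso_hom (eqToIso (reindexSquareEq C ubar v' ubar' vbar' sq'.w).symm)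
    exact @isIso_mateEquiv _ _ _ _ _ _ _ _ _ _ _ _ _ _ e.toAdjunction e'.toAdjunction _ _ _ hI

end IndexedCat
end
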